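/- Fix an integer m and a real number α ∈ (1/2, 2/3). For an integer N ≥ 6 let I₄ := {(j,l) : 1 ≤ j < N/2, j ≡ N−1 (mod 2), 0 ≤ l < j, (j − N/2)² + (l − N/3)² ≤ N^{2α}}. Then there exists a constant c > 0 such that for all integers N ≥ 6, | ∑_{(j,l) ∈ I₄} exp(πi m j²/(4N)) · ( (m/2)(j − N/2) + (v^j + v^{−j})/{j} + 2{2j}·∑_{k=1}^l 1/A(j,k) ) · S(j−l, j+l) | ≤ c · N^{3α} · F(⌊N/2⌋, ⌊N/3⌋). -/

import Mathlib

open Complex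

/-- `v = exp(πi/N)`. -/
noncomputable def vN (N : ℕ) : ℂ := Complex.exp (Real.pi * Complex.I / N)

/-- `{n} = v^n - v^{-n}` at `v = exp(πi/N)`. -/
noncomputable def br (N : ℕ) (n : ℤ) : ℂ := vN N ^ n - vN N ^ (-n)

/-- `A(j,k) = {j-k}{j+k}`. -/
noncomputable def AA (N : ℕ) (j k : ℤ) : ℂ := br N (j - k) * br N (j + k)

/-- `S(k,l) = ∏_{k ≤ r ≤ l} {r}`. -/
noncomputable def SS (N : ℕ) (k l : ℤ) : ℂ := ∏ r ∈ Finset.Icc k l, br N r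

/-- `F(j,l) = (∏_{r=1}^{l+j} 2 sin(rπ/N)) / (∏_{r=1}^{j-l-1} 2 sin(rπ/N))`. -/
noncomputable def FF (N j l : ℕ) : ℝ :=
  (∏ r ∈ Finset.Icc 1 (l + j), 2 * Real.sin (r * Real.pi / N)) /
    ∏ r ∈ Finset.Icc 1 (j - l - 1), 2 * Real.sin (r * Real.pi / N)

/-- `D₁(j,l) = (mj/2 + (v^j+v^{-j})/{j} + 2{2j}∑_{k=1}^l 1/A(j,k))·S(j-l,j+l)`. -/
noncomputable def D1 (N : ℕ) (m : ℤ) (j l : ℕ) : ℂ :=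
  ((m : ℂ) * (j : ℂ) / 2 + (vN N ^ (j : ℤ) + vN N ^ (-(j : ℤ))) / br N (j : ℤ) +
      2 * br N (2 * (j : ℤ)) * ∑ k ∈ Finset.Icc 1 l, 1 / AA N (j : ℤ) (k : ℤ)) *
    SS N ((j : ℤ) - (l : ℤ)) ((j : ℤ) + (l : ℤ))

open scoped Classical

/-!
Since `|{r}| = 2 sin(rπ/N)`, a product `|S(a,b)|` of consecutive factors is largest, up to a
factor `6`, when it runs exactly over the `r` with `2 sin(rπ/N) ≥ 1`, i.e. `N/6 ≤ r ≤ 5N/6`; that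
product is `F(⌊N/2⌋, ⌊N/3⌋)`. On `I₄` we have `|j - N/2|, |l - N/3| ≤ N^α`, so once
`24 N^α ≤ N` the bracket is `O(N^α)`: `{j}` and all `A(j,k)` with `k ≤ l` stay away from `0`,
while `{2j} = O(|2j - N|/N)` compensates the `l ≤ N/2` summands. As `I₄` has `O(N^{2α})` points,
the sum is `O(N^{3α} F)`; the finitely many `N` with `24 N^α > N` only enlarge the constant.
-/

open Real

lemma Real.half_le_sin_iff {θ : ℝ} (h0 : 0 ≤ θ) (hπ : θ ≤ π) :
    1 / 2 ≤ Real.sin θ ↔ π / 6 ≤ θ ∧ θ ≤ 5 * π / 6 := by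
  have key : ∀ φ, 0 ≤ φ → φ ≤ π / 2 → (1 / 2 ≤ Real.sin φ ↔ π / 6 ≤ φ) := fun φ h0 h1 => by
    rw [← Real.sin_pi_div_six]
    exact strictMonoOn_sin.le_iff_le ⟨by linarith [pi_pos], by linarith [pi_pos]⟩
      ⟨by linarith, h1⟩
  rcases le_total θ (π / 2) with h | h
  · rw [key θ h0 h]
    exact ⟨fun h' => ⟨h', by linarith [pi_pos]⟩, And.left⟩
  · rw [← Real.sin_pi_sub, key (π - θ) (by linarith) (by linarith)]
    exact ⟨fun h' => ⟨by linarith, by linarith⟩, fun h' => by linarith [h'.2]⟩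

noncomputable def chord (N : ℕ) (x : ℝ) : ℝ := 2 * Real.sin (x * π / N)

section chord

variable {N : ℕ} {x : ℝ}

lemma chord_pos (hx : 0 < x) (hxN : x < N) : 0 < chord N x := by
  have hN : (0 : ℝ) < N := hx.trans hxN
  refine mul_pos two_pos (Real.sin_pos_of_pos_of_lt_pi (by positivity) ?_)
  rw [div_lt_iff₀ hN]
  nlinarith [pi_pos]

lemma chord_le_two : chord N x ≤ 2 := by
  unfold chord; linarith [Real.sin_le_one (x * π / N)]

lemma chord_symm (hN : 0 < N) : chord N (N - x) = chord N x := by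
  unfold chord
  rw [← Real.sin_pi_sub]
  congr 2
  field_simp
  ring

lemma one_le_chord_iff (hN : 0 < N) (hx : 0 ≤ x) (hxN : x ≤ N) :
    1 ≤ chord N x ↔ N ≤ 6 * x ∧ 6 * x ≤ 5 * N := by
  have hN' : (0 : ℝ) < N := by exact_mod_cast hN
  have h1 : x * π / N ≤ π := by rw [div_le_iff₀ hN']; nlinarith [pi_pos]
  rw [chord, show 1 ≤ 2 * Real.sin (x * π / N) ↔ 1 / 2 ≤ Real.sin (x * π / N) by
      constructor <;> intro h <;> linarith,
    Real.half_le_sin_iff (by positivity) h1, div_le_div_iff₀ (by norm_num) hN',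
    div_le_div_iff₀ hN' (by norm_num)]
  constructor <;> rintro ⟨h, h'⟩ <;> constructor <;> nlinarith [pi_pos]

lemma four_mul_le_chord {c : ℝ} (hN : 0 < N) (hc0 : 0 ≤ c) (hc : c * N ≤ x)
    (hcN : x ≤ N - c * N) : 4 * c ≤ chord N x := by
  have hN' : (0 : ℝ) < N := by exact_mod_cast hN
  wlog hx : 2 * x ≤ N generalizing x
  · rw [← chord_symm hN]; exact this (by linarith) (by linarith) (by linarith)
  have hx0 : 0 ≤ x := le_trans (by positivity) hc
  have hJordan := mul_le_sin (x := x * π / N) (by positivity)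
    (by rw [div_le_div_iff₀ hN' two_pos]; nlinarith [pi_pos])
  have : 2 / π * (x * π / N) = 2 * x / N := by field_simp
  rw [this, div_le_iff₀ hN'] at hJordan
  have : 2 * c ≤ Real.sin (x * π / N) :=
    le_of_mul_le_mul_right (by nlinarith) hN'
  rw [chord]
  linarith

lemma chord_pos_of_lt {r : ℕ} (hr : 1 ≤ r) (hrN : r < N) : 0 < chord N r :=
  chord_pos (by exact_mod_cast hr) (by exact_mod_cast hrN)

lemma abs_chord_le (hN : 0 < N) : |chord N x| ≤ 2 * π * |x - N| / N := by
  have hN' : (0 : ℝ) < N := by exact_mod_cast hN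
  have : x * π / N = (x - N) * π / N + π := by field_simp; ring
  rw [chord, this, Real.sin_add_pi, abs_mul, abs_neg, abs_two, mul_div_assoc, mul_assoc,
    mul_div_assoc]
  refine mul_le_mul_of_nonneg_left (Real.abs_sin_le_abs.trans_eq ?_) two_pos.le
  rw [abs_mul, abs_of_pos (by positivity : 0 < π / N)]
  ring

end chord

lemma vN_zpow (N : ℕ) (n : ℤ) : vN N ^ n = Complex.exp ((n * π / N : ℝ) * Complex.I) := by
  rw [vN, ← Complex.exp_int_mul]
  congr 1
  push_cast
  ring

lemma norm_vN_zpow (N : ℕ) (n : ℤ) : ‖vN N ^ n‖ = 1 := by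
  rw [vN_zpow, Complex.norm_exp_ofReal_mul_I]

lemma br_eq_chord_mul_I (N : ℕ) (n : ℤ) : br N n = chord N n * Complex.I := by
  rw [br, vN_zpow, vN_zpow, Int.cast_neg, neg_mul, neg_div, Complex.ofReal_neg,
    Complex.exp_mul_I, Complex.exp_mul_I, Complex.cos_neg, Complex.sin_neg, chord,
    Complex.ofReal_mul, Complex.ofReal_sin]
  push_cast
  ring

lemma norm_br (N : ℕ) (n : ℤ) : ‖br N n‖ = |chord N n| := by
  rw [br_eq_chord_mul_I, norm_mul, Complex.norm_I, mul_one, Complex.norm_real, Real.norm_eq_abs]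

lemma norm_SS {N a b : ℕ} (ha : 1 ≤ a) (hb : b < N) :
    ‖SS N a b‖ = ∏ r ∈ Finset.Icc a b, chord N r := by
  rw [SS, norm_prod]
  symm
  refine Finset.prod_nbij (↑) (fun r hr => ?_) Nat.cast_injective.injOn (fun r hr => ?_)
    fun r hr => ?_
  · rw [Finset.mem_Icc] at hr ⊢
    omega
  · rw [Finset.coe_Icc, Set.mem_Icc] at hr
    lift r to ℕ using by omega
    exact ⟨r, by rw [Finset.coe_Icc, Set.mem_Icc]; omega, rfl⟩
  · rw [Finset.mem_Icc] at hr
    rw [norm_br, Int.cast_natCast, abs_of_pos (chord_pos_of_lt (by omega) (by omega))]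

lemma Finset.prod_mul_prod_sdiff_comm {ι M : Type*} [CommMonoid M] [DecidableEq ι]
    (s u : Finset ι) (f : ι → M) :
    (∏ i ∈ s, f i) * ∏ i ∈ u \ s, f i = (∏ i ∈ u, f i) * ∏ i ∈ s \ u, f i := by
  rw [← Finset.prod_union Finset.disjoint_sdiff, ← Finset.prod_union Finset.disjoint_sdiff,
    Finset.union_sdiff_self_eq_union, Finset.union_sdiff_self_eq_union, Finset.union_comm]

lemma Finset.mul_prod_le_mul_prod {ι R : Type*} [CommSemiring R] [PartialOrder R]
    [IsOrderedRing R] [DecidableEq ι] {s u : Finset ι} {f : ι → R} {c d : R}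
    (hs : 0 ≤ ∏ i ∈ s, f i) (hu : 0 ≤ ∏ i ∈ u, f i)
    (hc : c ≤ ∏ i ∈ u \ s, f i) (hd : ∏ i ∈ s \ u, f i ≤ d) :
    c * ∏ i ∈ s, f i ≤ d * ∏ i ∈ u, f i :=
  calc c * ∏ i ∈ s, f i ≤ (∏ i ∈ u \ s, f i) * ∏ i ∈ s, f i :=
        mul_le_mul_of_nonneg_right hc hs
    _ = (∏ i ∈ s \ u, f i) * ∏ i ∈ u, f i := by
        rw [mul_comm, Finset.prod_mul_prod_sdiff_comm, mul_comm]
    _ ≤ d * ∏ i ∈ u, f i := mul_le_mul_of_nonneg_right hd hu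

section maximal_product

variable {N : ℕ}

lemma one_le_chord_iff_of_lt {r : ℕ} (hrN : r < N) :
    1 ≤ chord N r ↔ N ≤ 6 * r ∧ 6 * r ≤ 5 * N := by
  rw [one_le_chord_iff (by omega) r.cast_nonneg (by exact_mod_cast hrN.le)]
  norm_cast

noncomputable def largeChordIndices (N : ℕ) : Finset ℕ :=
  (Finset.Icc 1 (N - 1)).filter (fun r : ℕ => 1 ≤ chord N r)

lemma mem_largeChordIndices {r : ℕ} :
    r ∈ largeChordIndices N ↔ 1 ≤ r ∧ r < N ∧ N ≤ 6 * r ∧ 6 * r ≤ 5 * N := by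
  rw [largeChordIndices, Finset.mem_filter, Finset.mem_Icc]
  constructor
  · rintro ⟨hr, h⟩
    exact ⟨hr.1, by omega, (one_le_chord_iff_of_lt (by omega)).1 h⟩
  · rintro ⟨h1, h2, h⟩
    exact ⟨⟨h1, by omega⟩, (one_le_chord_iff_of_lt h2).2 h⟩

lemma prod_chord_nonneg {s : Finset ℕ} (hs : ∀ r ∈ s, 1 ≤ r ∧ r < N) :
    0 ≤ ∏ r ∈ s, chord N r :=
  Finset.prod_nonneg fun r hr => (chord_pos_of_lt (hs r hr).1 (hs r hr).2).le

lemma prod_chord_le_prod_largeChordIndices {a b : ℕ} (ha : 1 ≤ a) (hb : b < N) :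
    ∏ r ∈ Finset.Icc a b, chord N r ≤ ∏ r ∈ largeChordIndices N, chord N r := by
  have key := Finset.mul_prod_le_mul_prod (s := Finset.Icc a b) (u := largeChordIndices N)
    (c := 1) (d := 1)
    (prod_chord_nonneg fun r hr => by rw [Finset.mem_Icc] at hr; omega)
    (prod_chord_nonneg fun r hr => by rw [mem_largeChordIndices] at hr; omega)
    (Finset.one_le_prod fun r hr => (Finset.mem_filter.1 (Finset.mem_sdiff.1 hr).1).2)
    (Finset.prod_le_one
      (fun r hr => by
        rw [Finset.mem_sdiff, Finset.mem_Icc] at hr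
        exact (chord_pos_of_lt (by omega) (by omega)).le)
      fun r hr => by
        rw [Finset.mem_sdiff, Finset.mem_Icc, mem_largeChordIndices] at hr
        by_contra h
        exact hr.2 ⟨by omega, by omega, (one_le_chord_iff_of_lt (by omega)).1 (not_le.1 h).le⟩)
  simpa using key

/-- `largeChordIndices N` is `[N/2 - N/3, N/2 + N/3]` up to the end points: it may lack
`N/2 - N/3`, where `chord ≥ 1/3`, and contain `N/2 + N/3 + 1`, where `chord ≤ 2`. -/
lemma prod_largeChordIndices_le (hN : 6 ≤ N) :
    ∏ r ∈ largeChordIndices N, chord N r ≤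
      6 * ∏ r ∈ Finset.Icc (N / 2 - N / 3) (N / 2 + N / 3), chord N r := by
  have key : 3⁻¹ * ∏ r ∈ largeChordIndices N, chord N r ≤
      2 * ∏ r ∈ Finset.Icc (N / 2 - N / 3) (N / 2 + N / 3), chord N r := by
    refine Finset.mul_prod_le_mul_prod
      (prod_chord_nonneg fun r hr => by rw [mem_largeChordIndices] at hr; omega)
      (prod_chord_nonneg fun r hr => by rw [Finset.mem_Icc] at hr; omega) ?_ ?_
    · have hsub : Finset.Icc (N / 2 - N / 3) (N / 2 + N / 3) \ largeChordIndices N ⊆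
          {N / 2 - N / 3} := by
        intro r hr
        rw [Finset.mem_sdiff, Finset.mem_Icc, mem_largeChordIndices] at hr
        rw [Finset.mem_singleton]
        omega
      rcases Finset.subset_singleton_iff.1 hsub with h | h <;> rw [h]
      · norm_num
      · rw [Finset.prod_singleton]
        have h1 : (N : ℝ) ≤ 12 * (N / 2 - N / 3 : ℕ) := by exact_mod_cast (by omega)
        have h2 : 12 * ((N / 2 - N / 3 : ℕ) : ℝ) ≤ 11 * N := by exact_mod_cast (by omega)
        have := four_mul_le_chord (N := N) (c := 1 / 12) (x := (N / 2 - N / 3 : ℕ))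
          (by omega) (by norm_num) (by linarith) (by linarith)
        linarith
    · have hsub : largeChordIndices N \ Finset.Icc (N / 2 - N / 3) (N / 2 + N / 3) ⊆
          {N / 2 + N / 3 + 1} := by
        intro r hr
        rw [Finset.mem_sdiff, Finset.mem_Icc, mem_largeChordIndices] at hr
        rw [Finset.mem_singleton]
        omega
      rcases Finset.subset_singleton_iff.1 hsub with h | h <;> rw [h]
      · norm_num
      · rw [Finset.prod_singleton]
        exact chord_le_two
  linarith

end maximal_product

lemma FF_pos {N j l : ℕ} (h : l + j < N) : 0 < FF N j l := by
  unfold FF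
  apply div_pos <;> refine Finset.prod_pos fun r hr => chord_pos_of_lt (N := N) ?_ ?_ <;>
    (rw [Finset.mem_Icc] at hr; omega)

lemma FF_eq_prod_chord {N j l : ℕ} (hlj : l < j) (hjN : j ≤ N) :
    FF N j l = ∏ r ∈ Finset.Icc (j - l) (l + j), chord N r := by
  have hsplit : (∏ r ∈ Finset.Icc 1 (j - l - 1), chord N r) *
      ∏ r ∈ Finset.Icc (j - l) (l + j), chord N r = ∏ r ∈ Finset.Icc 1 (l + j), chord N r := by
    simp only [← Finset.Ico_add_one_right_eq_Icc, show j - l - 1 + 1 = j - l by omega]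
    exact Finset.prod_Ico_consecutive _ (by omega) (by omega)
  have hden : ∏ r ∈ Finset.Icc 1 (j - l - 1), chord N r ≠ 0 :=
    Finset.prod_ne_zero_iff.2 fun r hr => (chord_pos_of_lt (Finset.mem_Icc.1 hr).1 (by
      rw [Finset.mem_Icc] at hr; omega)).ne'
  change (∏ r ∈ Finset.Icc 1 (l + j), chord N r) / ∏ r ∈ Finset.Icc 1 (j - l - 1), chord N r = _
  rw [← hsplit, mul_div_cancel_left₀ _ hden]

lemma norm_SS_le_FF {N j l : ℕ} (hN : 6 ≤ N) (hlj : l < j) (hjl : j + l < N) :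
    ‖SS N ((j : ℤ) - l) ((j : ℤ) + l)‖ ≤ 6 * FF N (N / 2) (N / 3) := by
  rw [show (j : ℤ) - l = ((j - l : ℕ) : ℤ) by omega, show (j : ℤ) + l = ((j + l : ℕ) : ℤ) by
      push_cast; ring, norm_SS (by omega) hjl, FF_eq_prod_chord (by omega) (by omega),
    show N / 3 + N / 2 = N / 2 + N / 3 by omega]
  exact (prod_chord_le_prod_largeChordIndices (by omega) hjl).trans (prod_largeChordIndices_le hN)

section bracket

variable {N : ℕ}

lemma four_mul_le_norm_br {n : ℤ} {c : ℝ} (hN : 0 < N) (hc0 : 0 ≤ c) (hc : c * N ≤ n)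
    (hcN : n ≤ N - c * N) : 4 * c ≤ ‖br N n‖ := by
  rw [norm_br]
  exact (four_mul_le_chord hN hc0 hc hcN).trans (le_abs_self _)

lemma norm_vN_add_div_br_le {j : ℤ} (hN : 0 < N) (hj : N ≤ 4 * j) (hj' : 4 * j ≤ 3 * N) :
    ‖(vN N ^ j + vN N ^ (-j)) / br N j‖ ≤ 2 := by
  have h1 : (N : ℝ) ≤ 4 * j := by exact_mod_cast hj
  have h2 : 4 * (j : ℝ) ≤ 3 * N := by exact_mod_cast hj'
  have hbr : 1 ≤ ‖br N j‖ := by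
    simpa using four_mul_le_norm_br (c := 1 / 4) hN (by norm_num) (by linarith) (by linarith)
  rw [norm_div, div_le_iff₀ (one_pos.trans_le hbr)]
  calc ‖vN N ^ j + vN N ^ (-j)‖ ≤ 2 := by
        refine (norm_add_le _ _).trans ?_
        rw [norm_vN_zpow, norm_vN_zpow]
        norm_num
    _ ≤ 2 * ‖br N j‖ := by linarith

lemma norm_one_div_AA_le {j k : ℤ} (hN : 0 < N) (hk : 0 ≤ k) (h : (N : ℝ) ≤ 12 * (j - k))
    (h' : 12 * ((j : ℝ) + k) ≤ 11 * N) : ‖1 / AA N j k‖ ≤ 9 := by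
  have hk' : (0 : ℝ) ≤ k := by exact_mod_cast hk
  have h1 := four_mul_le_norm_br (n := j - k) (c := 1 / 12) hN (by norm_num)
    (by push_cast; linarith) (by push_cast; linarith)
  have h2 := four_mul_le_norm_br (n := j + k) (c := 1 / 12) hN (by norm_num)
    (by push_cast; linarith) (by push_cast; linarith)
  rw [norm_div, norm_one, AA, norm_mul, div_le_iff₀ (by positivity)]
  nlinarith

lemma norm_br_le (hN : 0 < N) (n : ℤ) : ‖br N n‖ ≤ 2 * π * |(n : ℝ) - N| / N :=
  norm_br N n ▸ abs_chord_le hN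

lemma norm_two_mul_br_mul_sum_le {j l : ℕ} {t : ℝ} (hN : 0 < N) (hjt : |(j : ℝ) - N / 2| ≤ t)
    (hl : 2 * l ≤ N) (h : (N : ℝ) ≤ 12 * ((j : ℝ) - l)) (h' : 12 * ((j : ℝ) + l) ≤ 11 * N) :
    ‖2 * br N (2 * j) * ∑ k ∈ Finset.Icc 1 l, 1 / AA N j k‖ ≤ 144 * t := by
  have hN' : (0 : ℝ) < N := by exact_mod_cast hN
  have ht : 0 ≤ t := (abs_nonneg _).trans hjt
  have hbr : ‖br N (2 * j)‖ ≤ 4 * π * t / N := by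
    refine (norm_br_le hN _).trans (div_le_div_of_nonneg_right ?_ hN'.le)
    rw [show ((2 * j : ℤ) : ℝ) - N = 2 * ((j : ℝ) - N / 2) by push_cast; ring, abs_mul, abs_two]
    nlinarith [pi_pos]
  have hsum : ‖∑ k ∈ Finset.Icc 1 l, 1 / AA N j k‖ ≤ 9 * l := by
    refine (norm_sum_le_of_le (n := fun _ => 9) _ fun k hk => ?_).trans (by simp [mul_comm])
    have : (k : ℝ) ≤ l := by exact_mod_cast (Finset.mem_Icc.1 hk).2
    exact norm_one_div_AA_le hN (by omega) (by push_cast; linarith) (by push_cast; linarith)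
  have hl' : (l : ℝ) ≤ N / 2 := by
    rw [le_div_iff₀ two_pos]; exact_mod_cast (by omega : l * 2 ≤ N)
  calc ‖2 * br N (2 * j) * ∑ k ∈ Finset.Icc 1 l, 1 / AA N j k‖
      ≤ 2 * (4 * π * t / N) * (9 * (N / 2)) := by
        rw [norm_mul, norm_mul, Complex.norm_two]
        gcongr
        exact hsum.trans (by linarith)
    _ = 36 * π * t := by field_simp; ring
    _ ≤ 144 * t := by nlinarith [pi_le_four]

end bracket

noncomputable def D1modFactor (N : ℕ) (m : ℤ) (j l : ℕ) : ℂ :=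
  ((m : ℂ) / 2) * ((j : ℂ) - (N : ℂ) / 2) + (vN N ^ (j : ℤ) + vN N ^ (-(j : ℤ))) / br N (j : ℤ) +
    2 * br N (2 * (j : ℤ)) * ∑ k ∈ Finset.Icc 1 l, 1 / AA N (j : ℤ) (k : ℤ)

lemma norm_D1modFactor_le {N : ℕ} (m : ℤ) {j l : ℕ} {t : ℝ} (ht : 1 ≤ t) (htN : 24 * t ≤ N)
    (hlj : l < j) (hjN : 2 * j < N) (hjt : |(j : ℝ) - N / 2| ≤ t) (hlt : |(l : ℝ) - N / 3| ≤ t) :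
    ‖D1modFactor N m j l‖ ≤ (|(m : ℝ)| + 146) * t := by
  have hN : 0 < N := by omega
  obtain ⟨hj1, hj2⟩ := abs_le.1 hjt
  obtain ⟨hl1, hl2⟩ := abs_le.1 hlt
  have hjN' : 2 * (j : ℝ) < N := by exact_mod_cast hjN
  have hlj' : (l : ℝ) < j := by exact_mod_cast hlj
  have h1 : ‖((m : ℂ) / 2) * ((j : ℂ) - (N : ℂ) / 2)‖ ≤ |(m : ℝ)| / 2 * t := by
    rw [norm_mul, norm_div, Complex.norm_intCast, Complex.norm_two,
      show (j : ℂ) - (N : ℂ) / 2 = (((j : ℝ) - N / 2 : ℝ) : ℂ) by push_cast; ring,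
      Complex.norm_real, Real.norm_eq_abs]
    gcongr
  have h2 := norm_vN_add_div_br_le (j := j) hN (by exact_mod_cast (by linarith : (N : ℝ) ≤ 4 * j))
    (by omega)
  have h3 := norm_two_mul_br_mul_sum_le (l := l) hN hjt (by omega) (by linarith) (by linarith)
  unfold D1modFactor
  refine (norm_add₃_le ..).trans ?_
  nlinarith [abs_nonneg (m : ℝ)]

lemma card_le_of_forall_abs_sub_le {s : Finset ℕ} {x t : ℝ} (ht : 0 ≤ t)
    (h : ∀ n ∈ s, |(n : ℝ) - x| ≤ t) : (s.card : ℝ) ≤ 2 * t + 1 := by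
  rcases s.eq_empty_or_nonempty with rfl | hs
  · rw [Finset.card_empty, Nat.cast_zero]
    linarith
  have hsub : s ⊆ Finset.Icc (s.min' hs) (s.max' hs) :=
    fun n hn => Finset.mem_Icc.2 ⟨s.min'_le n hn, s.le_max' n hn⟩
  have hmin := abs_le.1 (h _ (s.min'_mem hs))
  have hmax := abs_le.1 (h _ (s.max'_mem hs))
  have hcard : (s.card : ℝ) ≤ (s.max' hs : ℝ) + 1 - s.min' hs := by
    have := (Finset.card_le_card hsub).trans_eq (Nat.card_Icc _ _)
    rw [← Nat.cast_le (α := ℝ), Nat.cast_sub (by have := s.min'_le_max' hs; omega)] at this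
    push_cast at this
    exact this
  linarith

/-- The region `I₄` of the paper, whose radius condition reads `… ≤ R` with `R = N^{2α}`. -/
noncomputable def I4 (N : ℕ) (R : ℝ) : Finset (ℕ × ℕ) :=
  (Finset.range N ×ˢ Finset.range N).filter
    (fun p => 1 ≤ p.1 ∧ 2 * p.1 < N ∧ p.1 % 2 = (N - 1) % 2 ∧ p.2 < p.1 ∧
      ((p.1 : ℝ) - (N : ℝ) / 2) ^ 2 + ((p.2 : ℝ) - (N : ℝ) / 3) ^ 2 ≤ R)

section region

variable {N : ℕ} {R t : ℝ}

lemma abs_sub_le_of_mem_I4 {p : ℕ × ℕ} (hp : p ∈ I4 N R) (ht : 0 ≤ t) (hR : R ≤ t ^ 2) :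
    |(p.1 : ℝ) - N / 2| ≤ t ∧ |(p.2 : ℝ) - N / 3| ≤ t := by
  have h := (Finset.mem_filter.1 hp).2.2.2.2.2
  exact ⟨abs_le_of_sq_le_sq (by nlinarith) ht, abs_le_of_sq_le_sq (by nlinarith) ht⟩

lemma card_I4_le (ht : 1 ≤ t) (hR : R ≤ t ^ 2) : ((I4 N R).card : ℝ) ≤ 9 * t ^ 2 := by
  have h1 := card_le_of_forall_abs_sub_le (s := (I4 N R).image Prod.fst) (x := N / 2) (t := t)
    (by linarith) (by
      simp only [Finset.mem_image]
      rintro _ ⟨p, hp, rfl⟩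
      exact (abs_sub_le_of_mem_I4 hp (by linarith) hR).1)
  have h2 := card_le_of_forall_abs_sub_le (s := (I4 N R).image Prod.snd) (x := N / 3) (t := t)
    (by linarith) (by
      simp only [Finset.mem_image]
      rintro _ ⟨p, hp, rfl⟩
      exact (abs_sub_le_of_mem_I4 hp (by linarith) hR).2)
  have := (Finset.card_le_card (Finset.subset_product (s := I4 N R))).trans_eq
    (Finset.card_product _ _)
  calc ((I4 N R).card : ℝ) ≤ (2 * t + 1) * (2 * t + 1) := by
        refine (Nat.cast_le.2 this).trans ?_
        push_cast
        exact mul_le_mul h1 h2 (by positivity) (by linarith)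
    _ ≤ 9 * t ^ 2 := by nlinarith

end region

lemma norm_sum_I4_le {N : ℕ} (m : ℤ) {R t : ℝ} (w : ℕ × ℕ → ℂ) (hw : ∀ p, ‖w p‖ ≤ 1)
    (ht : 1 ≤ t) (htN : 24 * t ≤ N) (hR : R ≤ t ^ 2) :
    ‖∑ p ∈ I4 N R, w p * D1modFactor N m p.1 p.2 * SS N ((p.1 : ℤ) - p.2) ((p.1 : ℤ) + p.2)‖ ≤
      54 * (|(m : ℝ)| + 146) * t ^ 3 * FF N (N / 2) (N / 3) := by
  have hN : 6 ≤ N := by exact_mod_cast (by linarith : (6 : ℝ) ≤ N)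
  have hF : 0 < FF N (N / 2) (N / 3) := FF_pos (by omega)
  have hterm : ∀ p ∈ I4 N R,
      ‖w p * D1modFactor N m p.1 p.2 * SS N ((p.1 : ℤ) - p.2) ((p.1 : ℤ) + p.2)‖ ≤
        (|(m : ℝ)| + 146) * t * (6 * FF N (N / 2) (N / 3)) := by
    intro p hp
    obtain ⟨-, hjN, -, hlj, -⟩ := (Finset.mem_filter.1 hp).2
    obtain ⟨hjt, hlt⟩ := abs_sub_le_of_mem_I4 hp (by linarith) hR
    rw [norm_mul, norm_mul, ← one_mul ((|(m : ℝ)| + 146) * t)]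
    gcongr
    · exact hw p
    · exact norm_D1modFactor_le m ht htN hlj hjN hjt hlt
    · exact norm_SS_le_FF hN hlj (by omega)
  calc _ ≤ ∑ p ∈ I4 N R,
        ‖w p * D1modFactor N m p.1 p.2 * SS N ((p.1 : ℤ) - p.2) ((p.1 : ℤ) + p.2)‖ :=
        norm_sum_le _ _
    _ ≤ (I4 N R).card * ((|(m : ℝ)| + 146) * t * (6 * FF N (N / 2) (N / 3))) := by
        rw [← nsmul_eq_mul]
        exact Finset.sum_le_card_nsmul _ _ _ hterm
    _ ≤ 9 * t ^ 2 * ((|(m : ℝ)| + 146) * t * (6 * FF N (N / 2) (N / 3))) := by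
        gcongr
        exact card_I4_le ht hR
    _ = 54 * (|(m : ℝ)| + 146) * t ^ 3 * FF N (N / 2) (N / 3) := by ring

lemma exists_forall_le_of_eventually {f g : ℕ → ℝ} {n₀ : ℕ} {C : ℝ}
    (hg : ∀ n, n₀ ≤ n → 0 < g n) (h : ∀ᶠ n in Filter.atTop, f n ≤ C * g n) :
    ∃ c, 0 < c ∧ ∀ n, n₀ ≤ n → f n ≤ c * g n := by
  obtain ⟨n₁, hn₁⟩ := Filter.eventually_atTop.1 h
  set c := |C| + 1 + ∑ n ∈ Finset.range n₁, |f n / g n|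
  have hsum : 0 ≤ ∑ n ∈ Finset.range n₁, |f n / g n| := by positivity
  refine ⟨c, by positivity, fun n hn => ?_⟩
  have hgn := hg n hn
  rcases le_or_gt n₁ n with h1 | h1
  · exact (hn₁ n h1).trans (by gcongr; linarith [le_abs_self C])
  · have : |f n / g n| ≤ c := by
      have := Finset.single_le_sum (f := fun n => |f n / g n|) (fun i _ => abs_nonneg _)
        (Finset.mem_range.2 h1)
      linarith [abs_nonneg C]
    calc f n ≤ |f n / g n| * g n := by
          rw [abs_div, abs_of_pos hgn, div_mul_cancel₀ _ hgn.ne']; exact le_abs_self _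
      _ ≤ c * g n := by gcongr

lemma eventually_mul_rpow_le {α : ℝ} (hα : α < 1) (C : ℝ) :
    ∀ᶠ n : ℕ in Filter.atTop, C * (n : ℝ) ^ α ≤ n := by
  have h0 : Filter.Tendsto (fun x : ℝ => C * x ^ (-(1 - α))) Filter.atTop (nhds 0) := by
    simpa using (tendsto_rpow_neg_atTop (by linarith : 0 < 1 - α)).const_mul C
  filter_upwards [tendsto_natCast_atTop_atTop.eventually
    ((h0.eventually (gt_mem_nhds one_pos)).and (Filter.eventually_gt_atTop 0))] with n hn
  obtain ⟨h1, hpos⟩ := hn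
  calc C * (n : ℝ) ^ α = C * (n : ℝ) ^ (-(1 - α)) * n := by
        rw [mul_assoc, ← Real.rpow_add_one hpos.ne']; ring_nf
    _ ≤ 1 * n := by gcongr
    _ = n := one_mul _

/-- Lemma 7 of the paper: the modified `D₁`-sum over the region `I₄` (close to
`(N/2, N/3)`) is `O(N^{3α} F(N/2,N/3))`. -/
theorem sum_I4_modified_bound (m : ℤ) (α : ℝ) (hα1 : 1 / 2 < α) (hα2 : α < 2 / 3) :
    ∃ c : ℝ, 0 < c ∧ ∀ N : ℕ, 6 ≤ N →
      ‖(∑ p ∈ (Finset.range N ×ˢ Finset.range N).filter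
            (fun p => 1 ≤ p.1 ∧ 2 * p.1 < N ∧ p.1 % 2 = (N - 1) % 2 ∧ p.2 < p.1 ∧
              ((p.1 : ℝ) - (N : ℝ) / 2) ^ 2 + ((p.2 : ℝ) - (N : ℝ) / 3) ^ 2 ≤
                (N : ℝ) ^ (2 * α)),
          Complex.exp (Real.pi * Complex.I * (m : ℂ) * (p.1 : ℂ) ^ 2 / (4 * (N : ℂ))) *
            (((m : ℂ) / 2) * ((p.1 : ℂ) - (N : ℂ) / 2) +
                (vN N ^ (p.1 : ℤ) + vN N ^ (-(p.1 : ℤ))) / br N (p.1 : ℤ) +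
                2 * br N (2 * (p.1 : ℤ)) *
                  ∑ k ∈ Finset.Icc 1 p.2, 1 / AA N (p.1 : ℤ) (k : ℤ)) *
            SS N ((p.1 : ℤ) - (p.2 : ℤ)) ((p.1 : ℤ) + (p.2 : ℤ)))‖ ≤
        c * (N : ℝ) ^ (3 * α) * FF N (N / 2) (N / 3) := by
  refine (exists_forall_le_of_eventually (n₀ := 6) (C := 54 * (|(m : ℝ)| + 146))
    (f := fun N => ‖∑ p ∈ I4 N ((N : ℝ) ^ (2 * α)),
      Complex.exp (Real.pi * Complex.I * (m : ℂ) * (p.1 : ℂ) ^ 2 / (4 * (N : ℂ))) *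
        D1modFactor N m p.1 p.2 * SS N ((p.1 : ℤ) - p.2) ((p.1 : ℤ) + p.2)‖)
    (g := fun N => (N : ℝ) ^ (3 * α) * FF N (N / 2) (N / 3))
    (fun N hN => mul_pos (by positivity) (FF_pos (by omega))) ?_).imp
    fun c hc => ⟨hc.1, fun N hN => (hc.2 N hN).trans_eq (mul_assoc _ _ _).symm⟩
  filter_upwards [eventually_mul_rpow_le (by linarith) 24, Filter.eventually_ge_atTop 1]
    with N hN hN1
  have hN' : (0 : ℝ) ≤ N := N.cast_nonneg
  have ht : 1 ≤ (N : ℝ) ^ α := Real.one_le_rpow (by exact_mod_cast hN1) (by linarith)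
  refine (norm_sum_I4_le m _ (fun p => ?_) ht hN ?_).trans_eq ?_
  · rw [show Real.pi * Complex.I * (m : ℂ) * (p.1 : ℂ) ^ 2 / (4 * (N : ℂ)) =
        ((Real.pi * m * p.1 ^ 2 / (4 * N) : ℝ) : ℂ) * Complex.I by push_cast; ring,
      Complex.norm_exp_ofReal_mul_I]
  · rw [← Real.rpow_mul_natCast hN', Nat.cast_ofNat, mul_comm]
  · rw [← Real.rpow_mul_natCast hN', Nat.cast_ofNat, mul_comm α]
    ring
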